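/- Discrete version of the threshold characterization: let w₁,…,w_N ∈ [0,1] with Σᵢwᵢ > 0 and D(y) = 2Σᵢyᵢwᵢ/(Σᵢyᵢ + Σᵢwᵢ) for y ∈ {0,1}^N. Then there exists a maximizer of D of the form y* where y*ᵢ = 1 iff wᵢ ≥ t for the threshold t = D*/2, where D* = max_y D(y). In particular some maximizer of D is a threshold segmentation of w. -/

import Mathlib

/-!
Let `D*` be the maximal Dice score, attained at a binary `y`. Clearing the (positive) denominator,
`c ≤ D(y)` is equivalent to `c ‖w‖₁ ≤ ∑ᵢ yᵢ (2wᵢ - c)`. For `c = D*` the right-hand side is a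
linear function of `y`, which over `[0,1]^N` is maximised by taking `yᵢ = 1` exactly where
`2wᵢ - D* ≥ 0`, i.e. by the threshold segmentation at `D*/2`. Hence that segmentation scores at
least `D*`, and so exactly `D*`.
-/

open Filter

noncomputable section

/-- Discrete soft-Dice loss `SD(x) = 1 - 2⟨x,w⟩/(‖x‖₁ + ‖w‖₁)`. -/
def SDd {N : ℕ} (w x : Fin N → ℝ) : ℝ :=
  1 - 2 * (∑ i, x i * w i) / ((∑ i, x i) + (∑ i, w i))

/-- Discrete Dice score `D(y) = 2⟨y,w⟩/(‖y‖₁ + ‖w‖₁)`. -/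
def Dd {N : ℕ} (w y : Fin N → ℝ) : ℝ :=
  2 * (∑ i, y i * w i) / ((∑ i, y i) + (∑ i, w i))

/-- The set of soft-Dice values over `[0,1]^N`. -/
def SDdvals {N : ℕ} (w : Fin N → ℝ) : Set ℝ :=
  {v : ℝ | ∃ x : Fin N → ℝ, (∀ i, x i ∈ Set.Icc (0:ℝ) 1) ∧ v = SDd w x}

/-- The set of Dice values over `{0,1}^N`. -/
def Ddvals {N : ℕ} (w : Fin N → ℝ) : Set ℝ :=
  {v : ℝ | ∃ y : Fin N → ℝ, (∀ i, y i = 0 ∨ y i = 1) ∧ v = Dd w y}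

open Finset

lemma mem_Icc_of_binary {ι : Type*} {y : ι → ℝ} (hy : ∀ i, y i = 0 ∨ y i = 1) (i : ι) :
    y i ∈ Set.Icc (0 : ℝ) 1 := by
  rcases hy i with h | h <;> simp [h]

lemma sum_mul_le_sum_threshold_mul {ι : Type*} [Fintype ι] (w y : ι → ℝ) (c : ℝ)
    (hy : ∀ i, y i ∈ Set.Icc (0 : ℝ) 1) :
    ∑ i, y i * (2 * w i - c) ≤ ∑ i, (if c / 2 ≤ w i then (1 : ℝ) else 0) * (2 * w i - c) := by
  refine sum_le_sum fun i _ => ?_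
  obtain ⟨hy0, hy1⟩ := hy i
  split_ifs <;> nlinarith

variable {N : ℕ}

lemma le_Dd_iff (w y : Fin N → ℝ) (c : ℝ) (hy : ∀ i, 0 ≤ y i) (hw : 0 < ∑ i, w i) :
    c ≤ Dd w y ↔ c * ∑ i, w i ≤ ∑ i, y i * (2 * w i - c) := by
  have hden : 0 < (∑ i, y i) + ∑ i, w i := by
    linarith [sum_nonneg fun i (_ : i ∈ univ) => hy i]
  have hexpand : ∑ i, y i * (2 * w i - c) = 2 * ∑ i, y i * w i - c * ∑ i, y i := by
    simp only [mul_sub, sum_sub_distrib, mul_sum]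
    congr 1 <;> exact sum_congr rfl fun i _ => by ring
  rw [Dd, le_div_iff₀ hden, hexpand]
  constructor <;> intro h <;> linarith

lemma Ddvals_finite (w : Fin N → ℝ) : (Ddvals w).Finite := by
  have hsub : Ddvals w ⊆ Dd w '' Set.pi Set.univ fun _ => ({0, 1} : Set ℝ) := by
    rintro v ⟨y, hy, rfl⟩
    exact ⟨y, fun i _ => hy i, rfl⟩
  exact ((Set.Finite.pi fun _ => (Set.finite_singleton 1).insert 0).image _).subset hsub

lemma Dd_threshold_mem_Ddvals (w : Fin N → ℝ) (c : ℝ) :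
    Dd w (fun i => if c / 2 ≤ w i then (1 : ℝ) else 0) ∈ Ddvals w :=
  ⟨_, fun i => by split_ifs <;> simp, rfl⟩

theorem discrete_dice_threshold_maximizer_general
    {N : ℕ} (w : Fin N → ℝ)
    (hpos : 0 < ∑ i, w i)
    (Dstar : ℝ) (hD : Dstar = sSup (Ddvals w)) :
    Dd w (fun i => if Dstar / 2 ≤ w i then (1:ℝ) else 0) = Dstar := by
  have hfin := Ddvals_finite w
  have hne : (Ddvals w).Nonempty := ⟨_, Dd_threshold_mem_Ddvals w 0⟩
  obtain ⟨y, hy, hyD⟩ : Dstar ∈ Ddvals w := hD ▸ hne.csSup_mem hfin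
  have hyIcc := mem_Icc_of_binary hy
  refine le_antisymm
    ((le_csSup hfin.bddAbove (Dd_threshold_mem_Ddvals w Dstar)).trans_eq hD.symm) ?_
  have hmax := (le_Dd_iff w y Dstar (fun i => (hyIcc i).1) hpos).1 hyD.le
  refine (le_Dd_iff _ _ Dstar (fun i => by split_ifs <;> norm_num) hpos).2 ?_
  exact hmax.trans (sum_mul_le_sum_threshold_mul w y Dstar hyIcc)

theorem discrete_dice_threshold_maximizer
    {N : ℕ} (hN : 1 ≤ N) (w : Fin N → ℝ)
    (hw : ∀ i, w i ∈ Set.Icc (0:ℝ) 1) (hpos : 0 < ∑ i, w i)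
    (Dstar : ℝ) (hD : Dstar = sSup (Ddvals w)) :
    Dd w (fun i => if Dstar / 2 ≤ w i then (1:ℝ) else 0) = Dstar :=
  discrete_dice_threshold_maximizer_general w hpos Dstar hD
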